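/- arXiv:0805.1964 — 5 statements merged into one kernel-verified Lean document; each statement's English description precedes it below -/
import Mathlib

section
/- The number of 132-avoiding permutations of length n equals the n-th Catalan number C_n = (1/(n+1))·binom(2n, n). -/
open Equiv

/-- The word `w` contains the pattern `p`: some subsequence of `w` is
order-isomorphic to `p`. -/
def Contains {α β : Type*} [LT α] [LT β] {n k : ℕ} (w : Fin n → α) (p : Fin k → β) : Prop :=
  ∃ f : Fin k → Fin n, StrictMono f ∧ ∀ i j : Fin k, p i < p j ↔ w (f i) < w (f j)

/-- The pattern 132 (written with 0-indexed values as (0,2,1)). -/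
def pat132 : Fin 3 → ℕ := ![0, 2, 1]

/-- `w` avoids the pattern 132. -/
def Avoids132 {n : ℕ} (w : Equiv.Perm (Fin n)) : Prop :=
  ¬ Contains (fun i => w i) pat132

/-- Pattern containment between permutations. -/
def ContainsP {n k : ℕ} (w : Equiv.Perm (Fin n)) (p : Equiv.Perm (Fin k)) : Prop :=
  Contains (fun i => w i) (fun i => p i)

/-- `w` is (up-down) alternating: `w 0 < w 1 > w 2 < w 3 > ⋯` (0-indexed). -/
def Alternating {m : ℕ} (w : Equiv.Perm (Fin m)) : Prop :=
  ∀ i : ℕ, ∀ h : i + 1 < m,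
    (i % 2 = 0 → w ⟨i, by omega⟩ < w ⟨i + 1, h⟩) ∧
    (i % 2 = 1 → w ⟨i + 1, h⟩ < w ⟨i, by omega⟩)

/-- The even-indexed (in 1-indexed terms: `w₂, w₄, …, w₂ₙ`) entries of `w`
are order-isomorphic to `u`. -/
def OrderIsoEven {n : ℕ} (w : Equiv.Perm (Fin (2 * n + 1))) (u : Equiv.Perm (Fin n)) : Prop :=
  ∀ i j : Fin n, u i < u j ↔
    w ⟨2 * (i : ℕ) + 1, by have := i.isLt; omega⟩ < w ⟨2 * (j : ℕ) + 1, by have := j.isLt; omega⟩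

/-! In a 132-avoiding permutation of length `n + 1`, every entry to the left of the maximum `n`
exceeds every entry to its right (otherwise those two entries and `n` form a 132). So the
permutation is `α n β`, where `α` is a 132-avoiding arrangement of the top `j` values below `n` and
`β` one of the bottom `n - j` values, `j` being the position of `n`; conversely every such word
avoids 132. Hence `s_{n+1}(132) = ∑_{j ≤ n} s_j(132) s_{n-j}(132)`, the Catalan recurrence. -/

open Function

theorem Contains.trans {α β γ : Type*} [LT α] [LT β] [LT γ] {n m k : ℕ} {w : Fin n → α}
    {u : Fin m → β} {p : Fin k → γ} (hu : Contains u p) (hw : Contains w u) : Contains w p := by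
  obtain ⟨f, hf, hfu⟩ := hu
  obtain ⟨g, hg, hgw⟩ := hw
  exact ⟨g ∘ f, hg.comp hf, fun i j => (hfu i j).trans (hgw (f i) (f j))⟩

theorem contains_pat132_iff {α : Type*} [LinearOrder α] {n : ℕ} (w : Fin n → α) :
    Contains w pat132 ↔ ∃ a b c : Fin n, a < b ∧ b < c ∧ w a < w c ∧ w c < w b := by
  constructor
  · rintro ⟨f, hf, hfw⟩
    exact ⟨f 0, f 1, f 2, hf (by decide), hf (by decide), (hfw 0 2).1 (by decide),
      (hfw 2 1).1 (by decide)⟩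
  · rintro ⟨a, b, c, hab, hbc, hac, hcb⟩
    refine ⟨![a, b, c], Fin.strictMono_iff_lt_succ.2 ?_, ?_⟩
    · simp [Fin.forall_fin_two, hab, hbc]
    · have hab' := hac.trans hcb
      intro i j
      fin_cases i <;> fin_cases j <;> simp [pat132, hac, hcb, hab', hac.le, hcb.le, hab'.le]

section Glue

variable {n j : ℕ} (hj : j ≤ n) (u : Perm (Fin j)) (v : Perm (Fin (n - j)))

/-- The word `(u + (n - j)) n v`. -/
def glueFun (i : Fin (n + 1)) : Fin (n + 1) :=
  if h : (i : ℕ) < j then ⟨u ⟨i, h⟩ + (n - j), by omega⟩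
  else if h' : (i : ℕ) = j then Fin.last n
  else ⟨v ⟨i - j - 1, by omega⟩, by omega⟩

variable {hj u v} {i : Fin (n + 1)}

theorem glueFun_val_of_lt (h : (i : ℕ) < j) :
    (glueFun hj u v i : ℕ) = u ⟨i, h⟩ + (n - j) := by
  simp [glueFun, h]

theorem glueFun_of_eq (h : (i : ℕ) = j) : glueFun hj u v i = Fin.last n := by
  simp [glueFun, h]

theorem glueFun_val_of_gt (h : j < (i : ℕ)) :
    (glueFun hj u v i : ℕ) = v ⟨i - j - 1, by omega⟩ := by
  simp [glueFun, h.not_gt, h.ne']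

variable (hj u v)

theorem glueFun_injective : Injective (glueFun hj u v) := by
  intro a b hab
  replace hab := congrArg Fin.val hab
  ext
  rcases lt_trichotomy (a : ℕ) j with ha | ha | ha <;>
    rcases lt_trichotomy (b : ℕ) j with hb | hb | hb <;>
    simp only [glueFun_val_of_lt, glueFun_val_of_gt, glueFun_of_eq, Fin.val_last, ha, hb,
      Nat.add_right_cancel_iff, Fin.val_inj, EmbeddingLike.apply_eq_iff_eq, Fin.mk.injEq] at hab <;>
    omega

noncomputable def glue : Perm (Fin (n + 1)) :=
  Equiv.ofBijective _ (glueFun_injective hj u v).bijective_of_finite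

theorem glue_apply (i : Fin (n + 1)) : glue hj u v i = glueFun hj u v i := rfl

theorem avoids132_glue (hu : Avoids132 u) (hv : Avoids132 v) : Avoids132 (glue hj u v) := by
  rw [Avoids132, contains_pat132_iff]
  rintro ⟨a, b, c, hab, hbc, hac, hcb⟩
  simp only [glue_apply, Fin.lt_def] at hab hbc hac hcb
  rcases lt_trichotomy (c : ℕ) j with hc | hc | hc
  · have hb : (b : ℕ) < j := hbc.trans hc
    have ha : (a : ℕ) < j := hab.trans hb
    refine hu ((contains_pat132_iff _).2 ⟨⟨a, ha⟩, ⟨b, hb⟩, ⟨c, hc⟩, hab, hbc, ?_, ?_⟩) <;>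
      simp only [Fin.lt_def, glueFun_val_of_lt ha, glueFun_val_of_lt hb,
        glueFun_val_of_lt hc] at * <;> omega
  · rw [glueFun_of_eq hc, Fin.val_last] at hcb
    omega
  · have ha : j < (a : ℕ) := by
      rcases lt_trichotomy (a : ℕ) j with ha | ha | ha
      · rw [glueFun_val_of_lt ha, glueFun_val_of_gt hc] at hac; omega
      · rw [glueFun_of_eq ha, Fin.val_last] at hac; omega
      · exact ha
    have hb : j < (b : ℕ) := ha.trans hab
    refine hv ((contains_pat132_iff _).2 ⟨⟨a - j - 1, by omega⟩, ⟨b - j - 1, by omega⟩,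
      ⟨c - j - 1, by omega⟩, Fin.mk_lt_mk.2 (by omega), Fin.mk_lt_mk.2 (by omega), ?_, ?_⟩) <;>
      simp only [Fin.lt_def, glueFun_val_of_gt ha, glueFun_val_of_gt hb,
        glueFun_val_of_gt hc] at * <;> omega

variable {hj u v}

theorem glue_inj {u' : Perm (Fin j)} {v' : Perm (Fin (n - j))} :
    glue hj u v = glue hj u' v' ↔ u = u' ∧ v = v' := by
  refine ⟨fun h => ⟨?_, ?_⟩, fun ⟨hu, hv⟩ => hu ▸ hv ▸ rfl⟩
  · ext i
    have := congrArg (fun w : Perm (Fin (n + 1)) => (w ⟨i, by omega⟩ : ℕ)) h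
    simpa [glue_apply, glueFun_val_of_lt] using this
  · ext k
    have := congrArg (fun w : Perm (Fin (n + 1)) => (w ⟨j + 1 + k, by omega⟩ : ℕ)) h
    simpa [glue_apply, glueFun_val_of_gt, show j < j + 1 + k by omega,
      show j + 1 + (k : ℕ) - j - 1 = k by omega] using this

end Glue

section Decompose

variable {n : ℕ} (w : Perm (Fin (n + 1)))

noncomputable def maxPos : Fin (n + 1) := w.symm (Fin.last n)

theorem apply_maxPos : w (maxPos w) = Fin.last n := w.apply_symm_apply _

theorem apply_ne_last_of_ne_maxPos {i : Fin (n + 1)} (h : i ≠ maxPos w) :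
    w i ≠ Fin.last n := by
  rwa [← apply_maxPos w, w.injective.ne_iff]

theorem maxPos_glue {j : ℕ} (hj : j ≤ n) (u : Perm (Fin j)) (v : Perm (Fin (n - j))) :
    maxPos (glue hj u v) = ⟨j, by omega⟩ :=
  (glue hj u v).symm_apply_eq.2 <| by rw [glue_apply, glueFun_of_eq]; rfl

variable {w}

theorem Avoids132.apply_lt_of_lt_maxPos_lt (hw : Avoids132 w) {i k : Fin (n + 1)}
    (hi : i < maxPos w) (hk : maxPos w < k) : w k < w i := by
  refine lt_of_not_ge fun hik => hw ((contains_pat132_iff _).2 ⟨i, maxPos w, k, hi, hk, ?_, ?_⟩)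
  · exact hik.lt_of_ne (w.injective.ne (hi.trans hk).ne)
  · rw [apply_maxPos]
    exact Fin.lt_last_iff_ne_last.2 (apply_ne_last_of_ne_maxPos w hk.ne')

theorem Avoids132.sub_maxPos_le_apply (hw : Avoids132 w) {i : Fin (n + 1)} (hi : i < maxPos w) :
    n - maxPos w ≤ (w i : ℕ) := by
  have hsub : (Finset.Ioi (maxPos w)).image w ⊆ Finset.Iio (w i) := by
    simp only [Finset.subset_iff, Finset.mem_image, Finset.mem_Ioi, Finset.mem_Iio]
    rintro _ ⟨k, hk, rfl⟩
    exact hw.apply_lt_of_lt_maxPos_lt hi hk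
  simpa [Finset.card_image_of_injective _ w.injective] using Finset.card_le_card hsub

theorem Avoids132.apply_lt_sub_maxPos (hw : Avoids132 w) {k : Fin (n + 1)} (hk : maxPos w < k) :
    (w k : ℕ) < n - maxPos w := by
  have hsub : (Finset.Iic (maxPos w)).image w ⊆ Finset.Ioi (w k) := by
    simp only [Finset.subset_iff, Finset.mem_image, Finset.mem_Iic, Finset.mem_Ioi]
    rintro _ ⟨i, hi, rfl⟩
    rcases hi.lt_or_eq with hi | rfl
    · exact hw.apply_lt_of_lt_maxPos_lt hi hk
    · rw [apply_maxPos]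
      exact Fin.lt_last_iff_ne_last.2 (apply_ne_last_of_ne_maxPos w hk.ne')
  have := Finset.card_le_card hsub
  rw [Finset.card_image_of_injective _ w.injective, Fin.card_Iic, Fin.card_Ioi] at this
  omega

theorem Avoids132.apply_castLE_mem_Ico (hw : Avoids132 w) (i : Fin (maxPos w)) :
    (w (Fin.castLE (maxPos w).isLt.le i) : ℕ) ∈ Set.Ico (n - maxPos w) n :=
  ⟨hw.sub_maxPos_le_apply i.isLt,
    Fin.val_lt_last (apply_ne_last_of_ne_maxPos w (Fin.ne_of_lt i.isLt))⟩

noncomputable def leftOfMax (hw : Avoids132 w) : Perm (Fin (maxPos w)) :=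
  Equiv.ofBijective
    (fun i => ⟨w (Fin.castLE (maxPos w).isLt.le i) - (n - maxPos w), by
      obtain ⟨h₁, h₂⟩ := hw.apply_castLE_mem_Ico i; omega⟩)
    (Injective.bijective_of_finite fun i i' h => by
      obtain ⟨hi, -⟩ := hw.apply_castLE_mem_Ico i
      obtain ⟨hi', -⟩ := hw.apply_castLE_mem_Ico i'
      simp only [Fin.mk.injEq] at h
      exact Fin.castLE_injective _ (w.injective (Fin.ext (by omega))))

theorem leftOfMax_val (hw : Avoids132 w) (i : Fin (maxPos w)) :
    (leftOfMax hw i : ℕ) = w (Fin.castLE (maxPos w).isLt.le i) - (n - maxPos w) := rfl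

noncomputable def rightOfMax (hw : Avoids132 w) : Perm (Fin (n - maxPos w)) :=
  Equiv.ofBijective
    (fun k => ⟨w ⟨maxPos w + 1 + k, by omega⟩,
      hw.apply_lt_sub_maxPos (by simp only [Fin.lt_def]; omega)⟩)
    (Injective.bijective_of_finite fun k k' h => by
      simpa [Fin.val_inj] using congrArg Fin.val h)

theorem rightOfMax_val (hw : Avoids132 w) (k : Fin (n - maxPos w)) :
    (rightOfMax hw k : ℕ) = w ⟨maxPos w + 1 + k, by omega⟩ := rfl

theorem avoids132_leftOfMax (hw : Avoids132 w) : Avoids132 (leftOfMax hw) := by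
  refine fun h => hw (h.trans ⟨Fin.castLE (maxPos w).isLt.le, Fin.strictMono_castLE _,
    fun i i' => ?_⟩)
  obtain ⟨hi, -⟩ := hw.apply_castLE_mem_Ico i
  obtain ⟨hi', -⟩ := hw.apply_castLE_mem_Ico i'
  simp only [Fin.lt_def, leftOfMax_val]
  omega

theorem avoids132_rightOfMax (hw : Avoids132 w) : Avoids132 (rightOfMax hw) :=
  fun h => hw (h.trans ⟨fun k => ⟨maxPos w + 1 + k, by omega⟩,
    fun k k' hk => Fin.mk_lt_mk.2 (by omega), fun k k' => Iff.rfl⟩)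

theorem glue_leftOfMax_rightOfMax (hw : Avoids132 w) :
    glue (maxPos w).is_le (leftOfMax hw) (rightOfMax hw) = w := by
  ext i
  rw [glue_apply]
  rcases lt_trichotomy (i : ℕ) (maxPos w) with h | h | h
  · have := hw.sub_maxPos_le_apply (Fin.lt_def.2 h)
    rw [glueFun_val_of_lt h, leftOfMax_val]
    simp only [Fin.castLE_mk, Fin.eta]
    omega
  · rw [glueFun_of_eq h, ← apply_maxPos w, Fin.ext h]
  · rw [glueFun_val_of_gt h, rightOfMax_val]
    congr 2
    ext
    dsimp only
    omega

end Decompose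

abbrev Av132 (n : ℕ) := {w : Perm (Fin n) // Avoids132 w}

noncomputable def glueAv132 (n : ℕ) :
    (Σ j : Fin (n + 1), Av132 j × Av132 (n - j)) → Av132 (n + 1) :=
  fun x => ⟨glue x.1.is_le x.2.1.1 x.2.2.1, avoids132_glue _ _ _ x.2.1.2 x.2.2.2⟩

theorem glueAv132_injective (n : ℕ) : Injective (glueAv132 n) := by
  rintro ⟨j, ⟨u, _⟩, ⟨v, _⟩⟩ ⟨j', ⟨u', _⟩, ⟨v', _⟩⟩ h
  replace h : glue j.is_le u v = glue j'.is_le u' v' := congrArg Subtype.val h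
  obtain rfl : j = j' := by simpa [maxPos_glue] using congrArg maxPos h
  obtain ⟨rfl, rfl⟩ := glue_inj.1 h
  rfl

theorem glueAv132_surjective (n : ℕ) : Surjective (glueAv132 n) := fun ⟨w, hw⟩ =>
  ⟨⟨maxPos w, ⟨leftOfMax hw, avoids132_leftOfMax hw⟩, ⟨rightOfMax hw, avoids132_rightOfMax hw⟩⟩,
    Subtype.ext (glue_leftOfMax_rightOfMax hw)⟩

theorem card_av132_succ (n : ℕ) :
    Nat.card (Av132 (n + 1)) =
      ∑ j : Fin (n + 1), Nat.card (Av132 j) * Nat.card (Av132 (n - j)) := by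
  rw [← Nat.card_eq_of_bijective _ ⟨glueAv132_injective n, glueAv132_surjective n⟩,
    Nat.card_sigma]
  simp only [Nat.card_prod]

theorem card_av132_zero : Nat.card (Av132 0) = 1 := by
  refine Nat.card_eq_one_iff_unique.2 ⟨inferInstance, ⟨⟨1, ?_⟩⟩⟩
  rintro ⟨f, -⟩
  exact (f 0).elim0

theorem card_av132 (n : ℕ) : Nat.card (Av132 n) = catalan n := by
  induction n using Nat.strong_induction_on with
  | _ n ih =>
    cases n with
    | zero => rw [card_av132_zero, catalan_zero]
    | succ n =>
      rw [card_av132_succ, catalan_succ]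
      exact Finset.sum_congr rfl fun j _ => by rw [ih j (by omega), ih (n - j) (by omega)]

/-- the number of 132-avoiding permutations of length `n` is the
`n`-th Catalan number `(2n).choose n / (n+1)`. -/
theorem stmt0 (n : ℕ) :
    Nat.card {w : Equiv.Perm (Fin n) // Avoids132 w} =
      Nat.choose (2 * n) n / (n + 1) := by
  rw [card_av132, catalan_eq_centralBinom_div, Nat.centralBinom]
end

section
/- If w is an alternating, 132-avoiding permutation of odd length 2n+1, then the odd-indexed entries are strictly decreasing: w_1 > w_3 > w_5 > ··· > w_{2n+1}. -/
open Equiv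

/-! If `a < b < c` and `w c < w b`, then 132-avoidance forces `w c < w a`, since otherwise
`w a < w c < w b` is an occurrence of 132. In an alternating permutation each odd position `2k + 1`
(0-indexed) descends to `2k + 2`, so with `a = 2k` the even-indexed entries decrease step by step. -/

lemma contains_pat132_of_lt {α : Type*} [Preorder α] {m : ℕ} {v : Fin m → α} {a b c : Fin m}
    (hab : a < b) (hbc : b < c) (hac : v a < v c) (hcb : v c < v b) : Contains v pat132 := by
  refine ⟨![a, b, c], Fin.strictMono_iff_lt_succ.2 fun i => ?_, fun i j => ?_⟩
  · fin_cases i <;> simpa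
  · fin_cases i <;> fin_cases j <;>
      simp [pat132, hac, hcb, hac.trans hcb, hac.not_gt, hcb.not_gt, (hac.trans hcb).not_gt]

lemma Avoids132.apply_lt_apply_of_lt_of_lt {m : ℕ} {w : Perm (Fin m)} (hw : Avoids132 w)
    {a b c : Fin m} (hab : a < b) (hbc : b < c) (hwcb : w c < w b) : w c < w a := by
  refine lt_of_le_of_ne (not_lt.1 fun hwac => hw ?_) (w.injective.ne (hab.trans hbc).ne')
  exact contains_pat132_of_lt hab hbc hwac hwcb

lemma Avoids132.strictAnti_even_of_alternating {n : ℕ} {w : Perm (Fin (2 * n + 1))}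
    (hw : Avoids132 w) (halt : Alternating w) :
    StrictAnti fun k : Fin (n + 1) => w ⟨2 * k, by omega⟩ := by
  refine Fin.strictAnti_iff_succ_lt.2 fun k => ?_
  have hk := k.isLt
  have hfall := (halt (2 * k + 1) (by omega)).2 (by omega)
  exact hw.apply_lt_apply_of_lt_of_lt (Fin.mk_lt_mk.2 (Nat.lt_succ_self _))
    (Fin.mk_lt_mk.2 (Nat.lt_succ_self _)) hfall

/-- the odd-indexed (1-indexed; even 0-indexed) entries of an
alternating 132-avoiding permutation of odd length are strictly decreasing. -/
theorem stmt7 (n : ℕ) (w : Equiv.Perm (Fin (2 * n + 1))) (h1 : Alternating w)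
    (h2 : Avoids132 w) :
    ∀ i j : Fin (2 * n + 1), i < j → (i : ℕ) % 2 = 0 → (j : ℕ) % 2 = 0 →
      w j < w i := by
  intro i j hij hi hj
  have hi2 : i = ⟨2 * (i / 2 : ℕ), by omega⟩ := Fin.ext (by simp only; omega)
  have hj2 : j = ⟨2 * (j / 2 : ℕ), by omega⟩ := Fin.ext (by simp only; omega)
  rw [hi2, hj2]
  exact h2.strictAnti_even_of_alternating h1
    (show (⟨i / 2, by omega⟩ : Fin (n + 1)) < ⟨j / 2, by omega⟩ from Fin.mk_lt_mk.2 (by omega))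
end

section
/- If w is an alternating, 132-avoiding permutation of odd length 2n+1, then the left-to-right minima of w are exactly its odd-indexed entries; in particular w_{2n+1} = 1. -/
/-!
An odd (0-indexed) entry `w i` exceeds its predecessor `w (i-1)`, so it is not a left-to-right
minimum. An even entry `w i` with `i > 0` is smaller than `w (i-1)`; an earlier `w j < w i`
with `j < i - 1` would then form the pattern 132 with `w (i-1)` and `w i`. The last entry is
even, hence smaller than every other entry.
-/

open Equiv

def IsLeftToRightMin {α : Type*} [LT α] {m : ℕ} (v : Fin m → α) (i : Fin m) : Prop :=
  ∀ j, j < i → v i < v j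

lemma contains_pat132 {α : Type*} [LinearOrder α] {N : ℕ} (v : Fin N → α) {a b c : Fin N}
    (hab : a < b) (hbc : b < c) (hac : v a < v c) (hcb : v c < v b) :
    Contains v pat132 := by
  refine ⟨![a, b, c], Fin.strictMono_iff_lt_succ.2 fun i => ?_, fun i j => ?_⟩
  · fin_cases i
    exacts [hab, hbc]
  · have hab' : v a < v b := hac.trans hcb
    fin_cases i <;> fin_cases j <;> simp [pat132, hac, hcb, hab', hac.le, hcb.le, hab'.le]

section

variable {m : ℕ} {w : Perm (Fin m)}

lemma Avoids132.apply_lt_of_lt (hw : Avoids132 w) {j k i : Fin m}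
    (hjk : j < k) (hki : k < i) (hik : w i < w k) : w i < w j := by
  by_contra! hji
  have hji' : w j < w i := hji.lt_of_ne (w.injective.ne (hjk.trans hki).ne)
  exact hw (contains_pat132 _ hjk hki hji' hik)

lemma Alternating.apply_lt_apply_of_even (hw : Alternating w)
    {i j : Fin m} (hij : (j : ℕ) = i + 1) (hi : (i : ℕ) % 2 = 0) : w i < w j := by
  obtain ⟨j, hj⟩ := j
  subst hij
  exact (hw i hj).1 hi

lemma Alternating.apply_lt_apply_of_odd (hw : Alternating w)
    {i j : Fin m} (hij : (j : ℕ) = i + 1) (hi : (i : ℕ) % 2 = 1) : w j < w i := by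
  obtain ⟨j, hj⟩ := j
  subst hij
  exact (hw i hj).2 hi

lemma Alternating.not_isLeftToRightMin_of_odd (hw : Alternating w)
    {i : Fin m} (hi : (i : ℕ) % 2 = 1) : ¬ IsLeftToRightMin w i := by
  intro hmin
  have hpos : 0 < (i : ℕ) := by omega
  let k : Fin m := ⟨i - 1, by omega⟩
  have hki : w k < w i := hw.apply_lt_apply_of_even (by simp [k]; omega) (by simp [k]; omega)
  exact (hmin k (Fin.lt_def.2 (by simp [k]; omega))).asymm hki

lemma Alternating.isLeftToRightMin_of_even (hw : Alternating w)
    (hw' : Avoids132 w) {i : Fin m} (hi : (i : ℕ) % 2 = 0) : IsLeftToRightMin w i := by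
  intro j hji
  have hpos : 0 < (i : ℕ) := (Nat.zero_le _).trans_lt hji
  let k : Fin m := ⟨i - 1, by omega⟩
  have hik : w i < w k := hw.apply_lt_apply_of_odd (by simp [k]; omega) (by simp [k]; omega)
  have hki : k < i := Fin.lt_def.2 (by simp [k]; omega)
  rcases eq_or_ne j k with hjk | hjk
  · rwa [hjk]
  · have hjk' : (j : ℕ) ≠ i - 1 := Fin.val_ne_of_ne hjk
    exact hw'.apply_lt_of_lt (Fin.lt_def.2 (by simp [k]; omega)) hki hik

end

lemma IsLeftToRightMin.apply_last_eq_zero {m : ℕ} {w : Perm (Fin (m + 1))}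
    (hw : IsLeftToRightMin w (Fin.last m)) : w (Fin.last m) = 0 := by
  by_contra hne
  have hlt : w.symm 0 < Fin.last m :=
    (Fin.le_last _).lt_of_ne fun h => hne (by rw [← h, apply_symm_apply])
  simpa using hw _ hlt

/-- the left-to-right minima of an alternating 132-avoiding
permutation of odd length are exactly its odd-indexed (1-indexed; even
0-indexed) entries; in particular the final entry is the minimum. -/
theorem stmt8 (n : ℕ) (w : Equiv.Perm (Fin (2 * n + 1))) (h1 : Alternating w)
    (h2 : Avoids132 w) :
    (∀ i : Fin (2 * n + 1), (∀ j, j < i → w i < w j) ↔ (i : ℕ) % 2 = 0) ∧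
    w (Fin.last (2 * n)) = 0 := by
  have hmin : ∀ i : Fin (2 * n + 1), IsLeftToRightMin w i ↔ (i : ℕ) % 2 = 0 := fun i =>
    ⟨fun hi => by
      by_contra hodd
      exact h1.not_isLeftToRightMin_of_odd (by omega) hi,
     h1.isLeftToRightMin_of_even h2⟩
  exact ⟨hmin, IsLeftToRightMin.apply_last_eq_zero ((hmin _).2 (by simp))⟩
end

section
/- For all n ≥ 0 and k ≥ 1, the number of 132-avoiding permutations of length n avoiding the increasing pattern 12···k equals the number of alternating, 132-avoiding permutations of length 2n+1 avoiding the increasing pattern 12···(k+1): s_n(132, 12···k) = a_{2n+1}(132, 12···(k+1)). -/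
open Equiv

/-! A `132`-avoiding permutation `w` with its maximum at position `a` is the skew sum
`(α ⊕ 1) ⊖ β`: everything left of the maximum exceeds everything right of it, and the two blocks
`α`, `β` are again `132`-avoiding. A longest increasing subsequence of `w` lies in `α` followed by
the maximum, or in `β`. If `w` is alternating of odd length, `a` is odd, so `α` and `β` are
alternating of odd lengths `2i + 1` and `2j + 1` with `i + j + 1 = n`. Hence
`s_n(132, 12⋯k)` and `a_{2n+1}(132, 12⋯(k+1))` satisfy the same recurrence
`f (n + 1) (k + 1) = ∑_{i + j = n} f i k * f j (k + 1)` with the same initial values. -/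

open Equiv Finset

section Patterns

variable {α γ : Type*} [LinearOrder α] [LinearOrder γ] {β : Type*} [LT β] {m n k : ℕ}

theorem Contains.length_le {w : Fin n → α} {p : Fin k → β} (h : Contains w p) : k ≤ n := by
  obtain ⟨f, hf, -⟩ := h
  simpa using Fintype.card_le_of_injective f hf.injective

theorem contains_iff_of_strictMono {u : Fin m → γ} {w : Fin n → α} {e : Fin m → Fin n}
    (he : StrictMono e) (hue : ∀ i j, u i < u j ↔ w (e i) < w (e j)) (p : Fin k → β) :
    Contains u p ↔ ∃ f : Fin k → Fin n, StrictMono f ∧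
      (∀ i j, p i < p j ↔ w (f i) < w (f j)) ∧ ∀ i, f i ∈ Set.range e := by
  constructor
  · rintro ⟨f, hf, hp⟩
    exact ⟨e ∘ f, he.comp hf, fun i j => (hp i j).trans (hue _ _), fun i => ⟨f i, rfl⟩⟩
  · rintro ⟨f, hf, hp, hfe⟩
    choose g hg using hfe
    refine ⟨g, fun i j hij => ?_, fun i j => ?_⟩
    · rw [← he.lt_iff_lt, hg, hg]
      exact hf hij
    · rw [hp, hue, ← hg i, ← hg j]

theorem contains_pat132_of_lt_s14 {w : Fin n → α} {i j l : Fin n} (hij : i < j) (hjl : j < l)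
    (hil : w i < w l) (hlj : w l < w j) : Contains w pat132 := by
  refine ⟨![i, j, l], ?_, fun s t => ?_⟩
  · rw [Fin.strictMono_iff_lt_succ]
    intro t
    fin_cases t <;> simpa
  · fin_cases s <;> fin_cases t <;>
      simp [pat132, hil, hlj, hil.trans hlj, hil.not_gt, hlj.not_gt, (hil.trans hlj).not_gt]

theorem StrictMono.snoc {f : Fin k → α} (hf : StrictMono f) {x : α} (hx : ∀ i, f i < x) :
    StrictMono (Fin.snoc f x : Fin (k + 1) → α) := by
  intro i j hij
  induction j using Fin.lastCases with
  | last =>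
    induction i using Fin.lastCases with
    | last => exact absurd hij (lt_irrefl _)
    | cast i => simpa using hx i
  | cast j =>
    induction i using Fin.lastCases with
    | last => exact absurd hij (not_lt.2 (Fin.le_last _))
    | cast i => simpa using hf (Fin.castSucc_lt_castSucc_iff.1 hij)

end Patterns

section Permutations

variable {n k : ℕ}

theorem containsP_one_iff (w : Perm (Fin n)) :
    ContainsP w (1 : Perm (Fin k)) ↔ ∃ f : Fin k → Fin n, StrictMono f ∧ StrictMono (w ∘ f) :=
  exists_congr fun _ => and_congr_right fun _ =>
    ⟨fun h i j hij => (h i j).1 hij, fun h _ _ => h.lt_iff_lt.symm⟩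

theorem containsP_one_zero (w : Perm (Fin n)) : ContainsP w (1 : Perm (Fin 0)) :=
  (containsP_one_iff w).2 ⟨Fin.elim0, fun i => i.elim0, fun i => i.elim0⟩

theorem containsP_one_iff_le (hn : n ≤ 1) (w : Perm (Fin n)) :
    ContainsP w (1 : Perm (Fin k)) ↔ k ≤ n := by
  refine ⟨Contains.length_le, fun hk => (containsP_one_iff w).2
    ⟨Fin.castLE hk, Fin.strictMono_castLE hk, fun i j hij => ?_⟩⟩
  rw [Fin.lt_def] at hij
  omega

theorem avoids132_of_le_two (hn : n ≤ 2) (w : Perm (Fin n)) : Avoids132 w :=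
  fun hc => by have := hc.length_le; omega

theorem Alternating.odd_symm_last {w : Perm (Fin (n + 1))} (hw : Alternating w) (hn : 1 ≤ n) :
    (w.symm (Fin.last n) : ℕ) % 2 = 1 := by
  set p := w.symm (Fin.last n) with hp
  have hwp : w p = Fin.last n := by simp [hp]
  have hlt : ∀ q, q ≠ p → w q < w p := fun q hq =>
    hwp ▸ lt_of_le_of_ne (Fin.le_last _) (hwp ▸ w.injective.ne hq)
  by_contra hodd
  rcases Nat.lt_or_ge ((p : ℕ) + 1) (n + 1) with hp1 | hp1
  · exact (hlt ⟨p + 1, hp1⟩ (by simp [Fin.ext_iff])).not_gt ((hw p hp1).1 (by omega))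
  · have hdesc := (hw (p - 1) (by omega)).2 (by omega)
    rw [show (⟨p - 1 + 1, _⟩ : Fin (n + 1)) = p from Fin.ext (by simp; omega)] at hdesc
    exact (hlt ⟨p - 1, by omega⟩ (Fin.ne_of_val_ne (by simp; omega))).not_gt hdesc

end Permutations

namespace SkewMax

variable {a b N : ℕ}

def left (h : a + 1 + b = N) : Fin a ↪o Fin N :=
  OrderEmbedding.ofStrictMono (fun i => ⟨i, by omega⟩) fun _ _ hij => hij

def mid (h : a + 1 + b = N) : Fin N := ⟨a, by omega⟩

def right (h : a + 1 + b = N) : Fin b ↪o Fin N :=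
  OrderEmbedding.ofStrictMono (fun j => ⟨a + 1 + j, by omega⟩) fun _ _ hij => by
    simp only [Fin.mk_lt_mk]; exact Nat.add_lt_add_left hij _

def toFun (h : a + 1 + b = N) (α : Perm (Fin a)) (β : Perm (Fin b)) (q : Fin N) : Fin N :=
  if hq : (q : ℕ) < a then ⟨b + α ⟨q, hq⟩, by omega⟩
  else if hq' : (q : ℕ) = a then ⟨a + b, by omega⟩
  else ⟨β ⟨q - (a + 1), by omega⟩, by omega⟩

variable (h : a + 1 + b = N)

@[simp] theorem val_left (i : Fin a) : (left h i : ℕ) = i := rfl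
@[simp] theorem val_mid : (mid h : ℕ) = a := rfl
@[simp] theorem val_right (j : Fin b) : (right h j : ℕ) = a + 1 + j := rfl

theorem left_lt_mid (i : Fin a) : left h i < mid h := Fin.lt_def.2 i.isLt

theorem mid_lt_right (j : Fin b) : mid h < right h j := Fin.lt_def.2 (by simp; omega)

theorem left_ne_right (i : Fin a) (j : Fin b) : left h i ≠ right h j :=
  ((left_lt_mid h i).trans (mid_lt_right h j)).ne

theorem eq_left_or_eq_mid_or_eq_right (q : Fin N) :
    (∃ i, q = left h i) ∨ q = mid h ∨ ∃ j, q = right h j := by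
  rcases lt_trichotomy (q : ℕ) a with hq | hq | hq
  · exact Or.inl ⟨⟨q, hq⟩, Fin.ext rfl⟩
  · exact Or.inr (Or.inl (Fin.ext hq))
  · exact Or.inr (Or.inr ⟨⟨q - (a + 1), by omega⟩, Fin.ext (by simp; omega)⟩)

theorem mem_range_left {q : Fin N} : q ∈ Set.range (left h) ↔ (q : ℕ) < a := by
  rcases eq_left_or_eq_mid_or_eq_right h q with ⟨i, rfl⟩ | rfl | ⟨j, rfl⟩ <;>
    simp [Fin.ext_iff] <;> omega

theorem mem_range_right {q : Fin N} : q ∈ Set.range (right h) ↔ a < q := by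
  rcases eq_left_or_eq_mid_or_eq_right h q with ⟨i, rfl⟩ | rfl | ⟨j, rfl⟩ <;>
    simp [Fin.ext_iff] <;> omega

variable (α : Perm (Fin a)) (β : Perm (Fin b))

@[simp] theorem toFun_left (i : Fin a) : (toFun h α β (left h i) : ℕ) = b + α i := by
  simp [toFun]

@[simp] theorem toFun_mid : (toFun h α β (mid h) : ℕ) = a + b := by
  simp [toFun]

@[simp] theorem toFun_right (j : Fin b) : (toFun h α β (right h j) : ℕ) = β j := by
  rw [toFun, dif_neg (by simp only [val_right]; omega), dif_neg (by simp only [val_right]; omega)]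
  simp

theorem toFun_injective : Function.Injective (toFun h α β) := by
  intro q r hqr
  rw [Fin.ext_iff] at hqr
  rcases eq_left_or_eq_mid_or_eq_right h q with ⟨i, rfl⟩ | rfl | ⟨j, rfl⟩ <;>
    rcases eq_left_or_eq_mid_or_eq_right h r with ⟨i', rfl⟩ | rfl | ⟨j', rfl⟩ <;>
    simp only [toFun_left, toFun_mid, toFun_right] at hqr
  all_goals first
    | rfl
    | omega
    | rw [α.injective (Fin.ext (Nat.add_left_cancel hqr) : α _ = α _)]
    | rw [β.injective (Fin.ext hqr : β _ = β _)]

end SkewMax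

open SkewMax

/-- The skew sum `(α ⊕ 1) ⊖ β`. -/
noncomputable def skewMax {a b N : ℕ} (h : a + 1 + b = N) (α : Perm (Fin a)) (β : Perm (Fin b)) :
    Perm (Fin N) :=
  Equiv.ofBijective (toFun h α β) (Finite.injective_iff_bijective.mp (toFun_injective h α β))

section SkewMaxLemmas

variable {a b N : ℕ} (h : a + 1 + b = N) (α : Perm (Fin a)) (β : Perm (Fin b))

@[simp] theorem skewMax_apply_left (i : Fin a) : (skewMax h α β (left h i) : ℕ) = b + α i :=
  toFun_left h α β i

@[simp] theorem skewMax_apply_mid : (skewMax h α β (mid h) : ℕ) = a + b :=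
  toFun_mid h α β

@[simp] theorem skewMax_apply_right (j : Fin b) : (skewMax h α β (right h j) : ℕ) = β j :=
  toFun_right h α β j

theorem skewMax_left_lt_left_iff (i i' : Fin a) :
    α i < α i' ↔ skewMax h α β (left h i) < skewMax h α β (left h i') := by
  simp only [Fin.lt_def, skewMax_apply_left, Nat.add_lt_add_iff_left]

theorem skewMax_right_lt_right_iff (j j' : Fin b) :
    β j < β j' ↔ skewMax h α β (right h j) < skewMax h α β (right h j') := by
  simp only [Fin.lt_def, skewMax_apply_right]

theorem le_skewMax_apply_of_lt {q : Fin N} (hq : (q : ℕ) < a) : b ≤ (skewMax h α β q : ℕ) := by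
  obtain ⟨i, rfl⟩ := (mem_range_left h).2 hq
  simp

theorem skewMax_apply_of_eq {q : Fin N} (hq : (q : ℕ) = a) : (skewMax h α β q : ℕ) = a + b := by
  obtain rfl : q = mid h := Fin.ext hq
  simp

theorem skewMax_apply_lt_of_gt {q : Fin N} (hq : a < (q : ℕ)) : (skewMax h α β q : ℕ) < b := by
  obtain ⟨j, rfl⟩ := (mem_range_right h).2 hq
  simp

theorem skewMax_lt_skewMax_mid {q : Fin N} (hq : q ≠ mid h) :
    skewMax h α β q < skewMax h α β (mid h) := by
  have := (skewMax h α β).injective.ne hq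
  rw [Ne, Fin.ext_iff, skewMax_apply_mid] at this
  rw [Fin.lt_def, skewMax_apply_mid]
  have := (skewMax h α β q).isLt
  omega

theorem skewMax_pat132_occurrence {f : Fin 3 → Fin N} (hf : StrictMono f)
    (hp : ∀ i j, pat132 i < pat132 j ↔ skewMax h α β (f i) < skewMax h α β (f j)) :
    (∀ i, f i ∈ Set.range (left h)) ∨ ∀ i, f i ∈ Set.range (right h) := by
  have h02 := (hp 0 2).1 (by decide)
  have h21 := (hp 2 1).1 (by decide)
  rw [Fin.lt_def] at h02 h21
  have hN := (skewMax h α β (f 1)).isLt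
  simp only [mem_range_left, mem_range_right]
  rcases lt_trichotomy (f 0 : ℕ) a with h0 | h0 | h0
  · left
    have := le_skewMax_apply_of_lt h α β h0
    have h2 : (f 2 : ℕ) < a := by
      rcases lt_trichotomy (f 2 : ℕ) a with h2 | h2 | h2
      · exact h2
      · have := skewMax_apply_of_eq h α β h2; omega
      · have := skewMax_apply_lt_of_gt h α β h2; omega
    exact fun i => lt_of_le_of_lt (hf.monotone (Fin.le_last i)) h2
  · have := skewMax_apply_of_eq h α β h0; omega
  · exact Or.inr fun i => lt_of_lt_of_le h0 (hf.monotone (Fin.zero_le i))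

theorem avoids132_skewMax_iff : Avoids132 (skewMax h α β) ↔ Avoids132 α ∧ Avoids132 β := by
  simp only [Avoids132, ← not_or, not_iff_not,
    contains_iff_of_strictMono (left h).strictMono (skewMax_left_lt_left_iff h α β),
    contains_iff_of_strictMono (right h).strictMono (skewMax_right_lt_right_iff h α β)]
  constructor
  · rintro ⟨f, hf, hp⟩
    rcases skewMax_pat132_occurrence h α β hf hp with hl | hr
    · exact Or.inl ⟨f, hf, hp, hl⟩
    · exact Or.inr ⟨f, hf, hp, hr⟩
  · rintro (⟨f, hf, hp, -⟩ | ⟨f, hf, hp, -⟩) <;> exact ⟨f, hf, hp⟩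

theorem containsP_one_skewMax_iff {k : ℕ} :
    ContainsP (skewMax h α β) (1 : Perm (Fin (k + 1))) ↔
      ContainsP α (1 : Perm (Fin k)) ∨ ContainsP β (1 : Perm (Fin (k + 1))) := by
  constructor
  · rintro ⟨g, hg, hp⟩
    rcases le_or_gt (g (Fin.last k) : ℕ) a with hl | hr
    · left
      refine (contains_iff_of_strictMono (left h).strictMono (skewMax_left_lt_left_iff h α β)
        _).2 ⟨g ∘ Fin.castSucc, hg.comp Fin.strictMono_castSucc, fun i j => ?_, fun i => ?_⟩
      · simpa [Fin.castSucc_lt_castSucc_iff] using hp i.castSucc j.castSucc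
      · have := hg (Fin.castSucc_lt_last i)
        rw [Fin.lt_def] at this
        rw [mem_range_left, Function.comp_apply]
        omega
    · -- an entry before the last one of the chain is below it, hence also right of the maximum
      right
      refine (contains_iff_of_strictMono (right h).strictMono (skewMax_right_lt_right_iff h α β)
        _).2 ⟨g, hg, hp, fun i => (mem_range_right h).2 ?_⟩
      have hlast := skewMax_apply_lt_of_gt h α β hr
      rcases (Fin.le_last i).lt_or_eq with hi | rfl
      · have hv : skewMax h α β (g i) < skewMax h α β (g (Fin.last k)) := (hp i _).1 hi
        rw [Fin.lt_def] at hv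
        by_contra hia
        have := le_skewMax_apply_of_lt h α β (q := g i)
        have := skewMax_apply_of_eq h α β (q := g i)
        omega
      · exact hr
  · rintro (hα | hβ)
    · obtain ⟨f, hf, hαf⟩ := (containsP_one_iff α).1 hα
      refine (containsP_one_iff _).2
        ⟨Fin.snoc (left h ∘ f) (mid h), ((left h).strictMono.comp hf).snoc fun i => ?_, ?_⟩
      · exact left_lt_mid h (f i)
      · rw [Fin.comp_snoc]
        refine StrictMono.snoc (fun i j hij => ?_) fun i => ?_
        · exact (skewMax_left_lt_left_iff h α β _ _).1 (hαf hij)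
        · exact skewMax_lt_skewMax_mid h α β (left_lt_mid h (f i)).ne
    · obtain ⟨f, hf, hp, -⟩ := (contains_iff_of_strictMono (right h).strictMono
        (skewMax_right_lt_right_iff h α β) _).1 hβ
      exact ⟨f, hf, hp⟩

theorem alternating_skewMax_iff (ha : a % 2 = 1) :
    Alternating (skewMax h α β) ↔ Alternating α ∧ Alternating β := by
  constructor
  · intro hw
    refine ⟨fun i hi => ?_, fun j hj => ?_⟩
    · obtain ⟨h0, h1⟩ := hw i (by omega)
      exact ⟨fun hp => (skewMax_left_lt_left_iff h α β ⟨i, by omega⟩ ⟨i + 1, hi⟩).2 (h0 hp),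
        fun hp => (skewMax_left_lt_left_iff h α β ⟨i + 1, hi⟩ ⟨i, by omega⟩).2 (h1 hp)⟩
    · obtain ⟨h0, h1⟩ := hw (a + 1 + j) (by omega)
      exact ⟨fun _ => (skewMax_right_lt_right_iff h α β ⟨j, by omega⟩ ⟨j + 1, hj⟩).2
          (h0 (by omega)),
        fun _ => (skewMax_right_lt_right_iff h α β ⟨j + 1, hj⟩ ⟨j, by omega⟩).2 (h1 (by omega))⟩
  · rintro ⟨hα, hβ⟩ i hi
    rcases lt_trichotomy (i + 1) a with hia | hia | hia
    · obtain ⟨h0, h1⟩ := hα i hia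
      exact ⟨fun hp => (skewMax_left_lt_left_iff h α β ⟨i, by omega⟩ ⟨i + 1, hia⟩).1 (h0 hp),
        fun hp => (skewMax_left_lt_left_iff h α β ⟨i + 1, hia⟩ ⟨i, by omega⟩).1 (h1 hp)⟩
    · exact ⟨fun _ => skewMax_lt_skewMax_mid h α β (Fin.ne_of_val_ne (show i ≠ a by omega))
        |>.trans_eq (by congr 1; ext; simp [hia]), by omega⟩
    · rcases Nat.lt_or_ge a i with hai | hai
      · obtain ⟨j, rfl⟩ : ∃ j, i = a + 1 + j := ⟨i - (a + 1), by omega⟩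
        obtain ⟨h0, h1⟩ := hβ j (by omega)
        exact ⟨fun _ => (skewMax_right_lt_right_iff h α β ⟨j, by omega⟩ ⟨j + 1, by omega⟩).1
            (h0 (by omega)),
          fun _ => (skewMax_right_lt_right_iff h α β ⟨j + 1, by omega⟩ ⟨j, by omega⟩).1
            (h1 (by omega))⟩
      · have hia : i = a := by omega
        refine ⟨by omega, fun _ => (skewMax_lt_skewMax_mid h α β
          (Fin.ne_of_val_ne (show i + 1 ≠ a by omega))).trans_eq (by congr 1; ext; simp [hia])⟩

end SkewMaxLemmas

section Decomposition

variable {a b N : ℕ} (h : a + 1 + b = N) {w : Perm (Fin N)}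

/-- Otherwise the two entries and the maximum between them form a `132`. -/
theorem right_lt_left_of_avoids132 (hw : Avoids132 w) (hmax : (w (mid h) : ℕ) = a + b)
    (i : Fin a) (j : Fin b) : w (right h j) < w (left h i) := by
  by_contra hij
  have hne : w (left h i) ≠ w (right h j) := w.injective.ne (left_ne_right h i j)
  have hjm : w (right h j) < w (mid h) := by
    have := w.injective.ne (mid_lt_right h j).ne'
    rw [Fin.lt_def, hmax]
    rw [Ne, Fin.ext_iff] at this
    have := (w (right h j)).isLt
    omega
  exact hw (contains_pat132_of_lt_s14 (left_lt_mid h i) (mid_lt_right h j)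
    (lt_of_le_of_ne (not_lt.1 hij) hne) hjm)

theorem le_apply_left_of_avoids132 (hw : Avoids132 w) (hmax : (w (mid h) : ℕ) = a + b)
    (i : Fin a) : b ≤ (w (left h i) : ℕ) := by
  simpa using Fintype.card_le_of_injective
    (fun j : Fin b => (⟨w (right h j), right_lt_left_of_avoids132 h hw hmax i j⟩ :
      Fin (w (left h i))))
    fun j j' hjj' => (right h).injective (w.injective (Fin.ext (Fin.mk.inj hjj')))

theorem exists_skewMax_eq (hw : Avoids132 w) (hmax : (w (mid h) : ℕ) = a + b) :
    ∃ α β, skewMax h α β = w := by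
  have hlt : ∀ q, q ≠ mid h → (w q : ℕ) < a + b := fun q hq => by
    have := w.injective.ne hq
    rw [Ne, Fin.ext_iff, hmax] at this
    have := (w q).isLt
    omega
  have hb := le_apply_left_of_avoids132 h hw hmax
  let α : Perm (Fin a) := Equiv.ofBijective
    (fun i => ⟨w (left h i) - b, by
      have := hlt (left h i) (left_lt_mid h i).ne
      have := i.isLt
      omega⟩)
    (Finite.injective_iff_bijective.mp fun i i' hii' => by
      have := hb i
      have := hb i'
      exact (left h).injective (w.injective (Fin.ext (by simp at hii'; omega))))
  have hα : ∀ i, (α i : ℕ) = w (left h i) - b := fun _ => rfl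
  -- `α` takes every value, so the values `b, …, a + b - 1` are used up left of the maximum
  have hright : ∀ j, (w (right h j) : ℕ) < b := fun j => by
    by_contra hj
    have := hlt (right h j) (mid_lt_right h j).ne'
    obtain ⟨i, hi⟩ := α.surjective ⟨w (right h j) - b, by omega⟩
    have := hb i
    rw [Fin.ext_iff, hα] at hi
    exact left_ne_right h i j (w.injective (Fin.ext (by simp only at hi; omega)))
  let β : Perm (Fin b) := Equiv.ofBijective (fun j => ⟨w (right h j), hright j⟩)
    (Finite.injective_iff_bijective.mp fun j j' hjj' =>
      (right h).injective (w.injective (Fin.ext (Fin.mk.inj hjj'))))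
  refine ⟨α, β, Equiv.ext fun q => Fin.ext ?_⟩
  rcases eq_left_or_eq_mid_or_eq_right h q with ⟨i, rfl⟩ | rfl | ⟨j, rfl⟩
  · have := hb i
    rw [skewMax_apply_left, hα]
    omega
  · rw [skewMax_apply_mid, hmax]
  · rw [skewMax_apply_right]
    rfl

end Decomposition

section Counting

variable {a b m : ℕ} (h : a + 1 + b = m + 1)

theorem skewMax_injective :
    Function.Injective fun p : Perm (Fin a) × Perm (Fin b) => skewMax h p.1 p.2 := by
  rintro ⟨α, β⟩ ⟨α', β'⟩ hαβ
  have hv (q) : (skewMax h α β q : ℕ) = skewMax h α' β' q := by simp only at hαβ; rw [hαβ]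
  simp only [Prod.mk.injEq]
  refine ⟨Equiv.ext fun i => Fin.ext ?_, Equiv.ext fun j => Fin.ext ?_⟩
  · have := hv (left h i)
    simp only [skewMax_apply_left] at this
    omega
  · simpa using hv (right h j)

theorem symm_last_eq_iff (w : Perm (Fin (m + 1))) :
    (w.symm (Fin.last m) : ℕ) = a ↔ (w (mid h) : ℕ) = a + b := by
  have : (w.symm (Fin.last m) : ℕ) = a ↔ w.symm (Fin.last m) = mid h := by
    rw [Fin.ext_iff, val_mid]
  rw [this, Equiv.symm_apply_eq, eq_comm, Fin.ext_iff, Fin.val_last]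
  omega

theorem card_avoids132_symm_last_eq (Q : Perm (Fin (m + 1)) → Prop) :
    Nat.card {w : Perm (Fin (m + 1)) // (Avoids132 w ∧ Q w) ∧ (w.symm (Fin.last m) : ℕ) = a} =
      Nat.card {p : Perm (Fin a) × Perm (Fin b) //
        (Avoids132 p.1 ∧ Avoids132 p.2) ∧ Q (skewMax h p.1 p.2)} := by
  symm
  refine Nat.card_eq_of_bijective (fun p => ⟨skewMax h p.1.1 p.1.2,
    ⟨(avoids132_skewMax_iff h _ _).2 p.2.1, p.2.2⟩,
    (symm_last_eq_iff h _).2 (skewMax_apply_mid h _ _)⟩)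
    ⟨fun p p' hp => Subtype.ext (skewMax_injective h (congrArg Subtype.val hp)), ?_⟩
  rintro ⟨w, ⟨hw, hQ⟩, hpos⟩
  obtain ⟨α, β, rfl⟩ := exists_skewMax_eq h hw ((symm_last_eq_iff h w).1 hpos)
  exact ⟨⟨(α, β), (avoids132_skewMax_iff h α β).1 hw, hQ⟩, rfl⟩

end Counting

theorem Nat.card_subtype_eq_sum_card_fiber {X : Type*} [Finite X] (P : X → Prop) (f : X → ℕ)
    {n : ℕ} (hf : ∀ x, f x < n) :
    Nat.card {x // P x} = ∑ a ∈ range n, Nat.card {x // P x ∧ f x = a} := by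
  classical
  have := Fintype.ofFinite X
  simp only [Nat.card_eq_fintype_card, Fintype.card_subtype, ← filter_filter]
  exact card_eq_sum_card_fiberwise fun x _ => mem_range.2 (hf x)

theorem Nat.card_subtype_prod {X Y : Type*} (P : X → Prop) (Q : Y → Prop) :
    Nat.card {p : X × Y // P p.1 ∧ Q p.2} = Nat.card {x // P x} * Nat.card {y // Q y} := by
  rw [Nat.card_congr Equiv.subtypeProdEquivProd, Nat.card_prod]

theorem Finset.sum_range_two_mul_add_one_of_even {M : Type*} [AddCommMonoid M] (n : ℕ)
    (f : ℕ → M) (hf : ∀ i ≤ n, f (2 * i) = 0) :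
    ∑ a ∈ range (2 * n + 1), f a = ∑ i ∈ range n, f (2 * i + 1) := by
  induction n with
  | zero => simpa using hf 0 le_rfl
  | succ n ih =>
    rw [show 2 * (n + 1) + 1 = 2 * n + 1 + 1 + 1 by ring, sum_range_succ, sum_range_succ,
      ih fun i hi => hf i (by omega), sum_range_succ, show 2 * n + 1 + 1 = 2 * (n + 1) by ring,
      hf (n + 1) le_rfl, add_zero]

/-- `s_n(132, 12⋯k)` -/
noncomputable def avoidCount (n k : ℕ) : ℕ :=
  Nat.card {w : Perm (Fin n) // Avoids132 w ∧ ¬ ContainsP w (1 : Perm (Fin k))}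

/-- `a_n(132, 12⋯k)` -/
noncomputable def altAvoidCount (n k : ℕ) : ℕ :=
  Nat.card {w : Perm (Fin n) // Alternating w ∧ Avoids132 w ∧ ¬ ContainsP w (1 : Perm (Fin k))}

theorem avoidCount_zero_right (n : ℕ) : avoidCount n 0 = 0 := by
  simp [avoidCount, containsP_one_zero]

theorem altAvoidCount_zero_right (n : ℕ) : altAvoidCount n 0 = 0 := by
  simp [altAvoidCount, containsP_one_zero]

theorem avoidCount_zero_eq_altAvoidCount_one (k : ℕ) :
    avoidCount 0 k = altAvoidCount 1 (k + 1) := by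
  have halt (w : Perm (Fin 1)) : Alternating w := fun i hi => by omega
  rcases k with _ | k <;>
    simp [avoidCount, altAvoidCount, containsP_one_iff_le, avoids132_of_le_two, halt]

theorem avoidCount_succ_succ (m k : ℕ) :
    avoidCount (m + 1) (k + 1) =
      ∑ a ∈ range (m + 1), avoidCount a k * avoidCount (m - a) (k + 1) := by
  rw [avoidCount, Nat.card_subtype_eq_sum_card_fiber _ (fun w => (w.symm (Fin.last m) : ℕ))
    fun w => (w.symm (Fin.last m)).isLt]
  refine sum_congr rfl fun a ha => ?_
  have h : a + 1 + (m - a) = m + 1 := by rw [mem_range] at ha; omega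
  rw [card_avoids132_symm_last_eq h, avoidCount, avoidCount, ← Nat.card_subtype_prod]
  simp only [containsP_one_skewMax_iff, not_or, and_and_and_comm]

theorem altAvoidCount_succ (n k : ℕ) :
    altAvoidCount (2 * (n + 1) + 1) (k + 1) =
      ∑ i ∈ range (n + 1),
        altAvoidCount (2 * i + 1) k * altAvoidCount (2 * (n - i) + 1) (k + 1) := by
  rw [altAvoidCount, Nat.card_congr (Equiv.subtypeEquivRight fun w => and_left_comm),
    Nat.card_subtype_eq_sum_card_fiber _ (fun w => (w.symm (Fin.last _) : ℕ))
      fun w => (w.symm (Fin.last _)).isLt, sum_range_two_mul_add_one_of_even]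
  · refine sum_congr rfl fun i hi => ?_
    have h : 2 * i + 1 + 1 + (2 * (n - i) + 1) = 2 * (n + 1) + 1 := by rw [mem_range] at hi; omega
    rw [card_avoids132_symm_last_eq h, altAvoidCount, altAvoidCount, ← Nat.card_subtype_prod]
    simp only [alternating_skewMax_iff h _ _ (by omega), containsP_one_skewMax_iff, not_or]
    exact Nat.card_congr (Equiv.subtypeEquivRight fun _ => by tauto)
  · refine fun i _ => Nat.card_eq_zero.2 (Or.inl ⟨fun ⟨w, ⟨_, hw, _⟩, hpos⟩ => ?_⟩)
    have := hw.odd_symm_last (by omega)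
    omega

theorem avoidCount_eq_altAvoidCount (n k : ℕ) :
    avoidCount n k = altAvoidCount (2 * n + 1) (k + 1) := by
  induction n using Nat.strong_induction_on generalizing k with
  | _ n ih =>
  rcases n with _ | m
  · exact avoidCount_zero_eq_altAvoidCount_one k
  rcases k with _ | k
  · rw [avoidCount_zero_right, altAvoidCount_succ,
      sum_eq_zero fun i _ => by rw [altAvoidCount_zero_right, zero_mul]]
  · rw [avoidCount_succ_succ, altAvoidCount_succ]
    refine sum_congr rfl fun i hi => ?_
    rw [mem_range] at hi
    rw [ih i (by omega), ih (m - i) (by omega)]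

theorem stmt14_general (n k : ℕ) :
    Nat.card {w : Equiv.Perm (Fin n) //
        Avoids132 w ∧ ¬ ContainsP w (1 : Equiv.Perm (Fin k))} =
      Nat.card {w : Equiv.Perm (Fin (2 * n + 1)) //
        Alternating w ∧ Avoids132 w ∧
          ¬ ContainsP w (1 : Equiv.Perm (Fin (k + 1)))} :=
  avoidCount_eq_altAvoidCount n k

/-- `s_n(132, 12⋯k) = a_{2n+1}(132, 12⋯(k+1))` for `n ≥ 0`,
`k ≥ 1`; the identity permutation is the increasing pattern. -/
theorem stmt14 (n k : ℕ) (hk : 1 ≤ k) :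
    Nat.card {w : Equiv.Perm (Fin n) //
        Avoids132 w ∧ ¬ ContainsP w (1 : Equiv.Perm (Fin k))} =
      Nat.card {w : Equiv.Perm (Fin (2 * n + 1)) //
        Alternating w ∧ Avoids132 w ∧
          ¬ ContainsP w (1 : Equiv.Perm (Fin (k + 1)))} :=
  stmt14_general n k
end

section
/- For all n ≥ 0, the number of alternating, 132-avoiding permutations of length 2n+1 that avoid the pattern 1234 equals ⌈2^{n−1}⌉ (with value 1 at n = 0). -/
open Equiv

/-!
Call a permutation admissible if it is alternating and avoids 132 and 1234. In an admissible `w`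
of length `m + 2`, no later entry lies between `w 0` and `w 1` (it would complete a 132), and at
most one later entry exceeds `w 1` (two of them would form a 132, or a 1234 together with `w 0`
and `w 1`). Since `w` is onto, this forces `w 0 = c` and `w 1 = c + 1` with `c ∈ {m - 1, m}`,
and the remaining entries, standardized, form an admissible permutation of length `m`.
Conversely, for `m ≥ 2`, putting `c, c + 1` in front of an admissible permutation of length `m`
whose entries `≥ c` are raised by 2 gives an admissible one. So the count doubles from each odd
length `≥ 3` to the next, and lengths 1 and 3 have one admissible permutation each.
-/

theorem exists_perm_comp_eq {ι β : Type*} [Finite ι] {f u : ι → β}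
    (hu : Function.Injective u) (h : ∀ k, u k ∈ Set.range f) :
    ∃ v : Perm ι, f ∘ v = u := by
  choose v hv using h
  have hv' : Function.Injective v := fun a b hab => hu (by rw [← hv a, ← hv b, hab])
  exact ⟨Equiv.ofBijective v (Finite.injective_iff_bijective.mp hv'), funext hv⟩

section Words

variable {α β : Type*} {m : ℕ}

def Has132 [LT α] (w : Fin m → α) : Prop :=
  ∃ i j k, i < j ∧ j < k ∧ w i < w k ∧ w k < w j

def Has1234 [LT α] (w : Fin m → α) : Prop :=
  ∃ i j k l, i < j ∧ j < k ∧ k < l ∧ w i < w j ∧ w j < w k ∧ w k < w l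

def IsAlternating [LT α] (w : Fin m → α) : Prop :=
  ∀ i : ℕ, ∀ h : i + 1 < m,
    (i % 2 = 0 → w ⟨i, by omega⟩ < w ⟨i + 1, h⟩) ∧
    (i % 2 = 1 → w ⟨i + 1, h⟩ < w ⟨i, by omega⟩)

instance [LT α] [DecidableLT α] (w : Fin m → α) : Decidable (Has132 w) := by
  unfold Has132; infer_instance

instance [LT α] [DecidableLT α] (w : Fin m → α) : Decidable (Has1234 w) := by
  unfold Has1234; infer_instance

instance [LT α] [DecidableLT α] (w : Fin m → α) : Decidable (IsAlternating w) :=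
  decidable_of_iff
    (∀ i : Fin m, ∀ h : (i : ℕ) + 1 < m,
      ((i : ℕ) % 2 = 0 → w i < w ⟨i + 1, h⟩) ∧ ((i : ℕ) % 2 = 1 → w ⟨i + 1, h⟩ < w i))
    ⟨fun H i h => H ⟨i, by omega⟩ h, fun H i h => H i h⟩

theorem contains_pat132_iff_s16 [Preorder α] (w : Fin m → α) : Contains w pat132 ↔ Has132 w := by
  constructor
  · rintro ⟨f, hf, hw⟩
    exact ⟨f 0, f 1, f 2, hf (by decide), hf (by decide), (hw 0 2).1 (by decide),
      (hw 2 1).1 (by decide)⟩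
  · rintro ⟨i, j, k, hij, hjk, hik, hkj⟩
    refine ⟨![i, j, k], ?_, ?_⟩
    · simp [Fin.strictMono_iff_lt_succ, Fin.forall_fin_two, hij, hjk]
    · have hij' := hik.trans hkj
      simp [Fin.forall_fin_succ, pat132, hik, hkj, hij', hik.not_gt, hkj.not_gt, hij'.not_gt]

theorem contains_one_iff [Preorder α] (w : Fin m → α) :
    Contains w (fun i => (1 : Perm (Fin 4)) i) ↔ Has1234 w := by
  constructor
  · rintro ⟨f, hf, hw⟩
    exact ⟨f 0, f 1, f 2, f 3, hf (by decide), hf (by decide), hf (by decide),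
      (hw 0 1).1 (by decide), (hw 1 2).1 (by decide), (hw 2 3).1 (by decide)⟩
  · rintro ⟨i, j, k, l, hij, hjk, hkl, h₁, h₂, h₃⟩
    have hf : StrictMono ![i, j, k, l] := by
      simp [Fin.strictMono_iff_lt_succ, Fin.forall_fin_succ, hij, hjk, hkl]
    have hwf : StrictMono (w ∘ ![i, j, k, l]) := by
      simp [Fin.strictMono_iff_lt_succ, Fin.forall_fin_succ, h₁, h₂, h₃]
    exact ⟨_, hf, fun a b => hwf.lt_iff_lt.symm⟩

theorem has132_comp_iff [LinearOrder α] [Preorder β] {g : α → β} (hg : StrictMono g)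
    (w : Fin m → α) : Has132 (g ∘ w) ↔ Has132 w := by
  simp only [Has132, Function.comp_apply, hg.lt_iff_lt]

theorem has1234_comp_iff [LinearOrder α] [Preorder β] {g : α → β} (hg : StrictMono g)
    (w : Fin m → α) : Has1234 (g ∘ w) ↔ Has1234 w := by
  simp only [Has1234, Function.comp_apply, hg.lt_iff_lt]

theorem isAlternating_comp_iff [LinearOrder α] [Preorder β] {g : α → β} (hg : StrictMono g)
    (w : Fin m → α) : IsAlternating (g ∘ w) ↔ IsAlternating w := by
  simp only [IsAlternating, Function.comp_apply, hg.lt_iff_lt]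

theorem has132_cons_iff [Preorder α] (a : α) (w : Fin m → α) :
    Has132 (Fin.cons a w) ↔
      Has132 w ∨ ∃ j k, j < k ∧ a < w k ∧ w k < w j := by
  constructor
  · rintro ⟨i, j, k, hij, hjk, hik, hkj⟩
    obtain ⟨j, rfl⟩ := Fin.exists_succ_eq.2 (Fin.ne_zero_of_lt hij)
    obtain ⟨k, rfl⟩ := Fin.exists_succ_eq.2 (Fin.ne_zero_of_lt hjk)
    obtain rfl | ⟨i, rfl⟩ := Fin.eq_zero_or_eq_succ i
    · simp only [Fin.cons_zero, Fin.cons_succ, Fin.succ_lt_succ_iff] at hjk hik hkj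
      exact Or.inr ⟨j, k, hjk, hik, hkj⟩
    · simp only [Fin.cons_succ, Fin.succ_lt_succ_iff] at hij hjk hik hkj
      exact Or.inl ⟨i, j, k, hij, hjk, hik, hkj⟩
  · rintro (⟨i, j, k, hij, hjk, hik, hkj⟩ | ⟨j, k, hjk, hak, hkj⟩)
    · exact ⟨i.succ, j.succ, k.succ, Fin.succ_lt_succ_iff.2 hij, Fin.succ_lt_succ_iff.2 hjk,
        hik, hkj⟩
    · exact ⟨0, j.succ, k.succ, Fin.succ_pos j, Fin.succ_lt_succ_iff.2 hjk, hak, hkj⟩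

theorem has1234_cons_iff [Preorder α] (a : α) (w : Fin m → α) :
    Has1234 (Fin.cons a w) ↔
      Has1234 w ∨ ∃ j k l, j < k ∧ k < l ∧ a < w j ∧ w j < w k ∧ w k < w l := by
  constructor
  · rintro ⟨i, j, k, l, hij, hjk, hkl, h₁, h₂, h₃⟩
    obtain ⟨j, rfl⟩ := Fin.exists_succ_eq.2 (Fin.ne_zero_of_lt hij)
    obtain ⟨k, rfl⟩ := Fin.exists_succ_eq.2 (Fin.ne_zero_of_lt hjk)
    obtain ⟨l, rfl⟩ := Fin.exists_succ_eq.2 (Fin.ne_zero_of_lt hkl)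
    simp only [Fin.cons_succ, Fin.succ_lt_succ_iff] at hjk hkl h₁ h₂ h₃
    obtain rfl | ⟨i, rfl⟩ := Fin.eq_zero_or_eq_succ i
    · exact Or.inr ⟨j, k, l, hjk, hkl, h₁, h₂, h₃⟩
    · simp only [Fin.cons_succ, Fin.succ_lt_succ_iff] at hij h₁
      exact Or.inl ⟨i, j, k, l, hij, hjk, hkl, h₁, h₂, h₃⟩
  · rintro (⟨i, j, k, l, hij, hjk, hkl, h₁, h₂, h₃⟩ | ⟨j, k, l, hjk, hkl, h₁, h₂, h₃⟩)
    · exact ⟨i.succ, j.succ, k.succ, l.succ, Fin.succ_lt_succ_iff.2 hij,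
        Fin.succ_lt_succ_iff.2 hjk, Fin.succ_lt_succ_iff.2 hkl, h₁, h₂, h₃⟩
    · exact ⟨0, j.succ, k.succ, l.succ, Fin.succ_pos j, Fin.succ_lt_succ_iff.2 hjk,
        Fin.succ_lt_succ_iff.2 hkl, h₁, h₂, h₃⟩

theorem isAlternating_cons_cons_iff [LT α] (x y : α) (u : Fin m → α) :
    IsAlternating (Fin.cons x (Fin.cons y u)) ↔
      x < y ∧ (∀ h : 0 < m, u ⟨0, h⟩ < y) ∧ IsAlternating u := by
  constructor
  · intro h
    refine ⟨?_, fun hm => ?_, fun i hi => ?_⟩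
    · exact (h 0 (by omega)).1 rfl
    · exact (h 1 (by omega)).2 rfl
    · have := h (i + 2) (by omega)
      rw [Nat.add_mod_right] at this
      exact this
  · rintro ⟨hxy, hy, hu⟩ (_ | _ | i) hi
    · exact ⟨fun _ => hxy, nofun⟩
    · exact ⟨nofun, fun _ => hy (by omega)⟩
    · have := hu i (by omega)
      rw [← Nat.add_mod_right] at this
      exact this

theorem eq_cons_cons (f : Fin (m + 2) → α) :
    f = Fin.cons (f 0) (Fin.cons (f 1) fun k => f k.succ.succ) := by
  funext i
  induction i using Fin.cases with
  | zero => rfl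
  | succ i => induction i using Fin.cases with
    | zero => simp
    | succ k => rfl

def IsTopPair [LT α] (x y : α) (u : Fin m → α) : Prop :=
  x < y ∧ (∀ k, x < u k → y < u k) ∧ ∀ j k, y < u j → y < u k → j = k

theorem IsTopPair.has132_cons_cons_iff [Preorder α] {x y : α} {u : Fin m → α}
    (h : IsTopPair x y u) :
    Has132 (Fin.cons x (Fin.cons y u)) ↔ Has132 u := by
  obtain ⟨-, hgap, htop⟩ := h
  rw [has132_cons_iff, has132_cons_iff]
  refine ⟨?_, fun h => Or.inl (Or.inl h)⟩
  rintro ((h | ⟨j, k, hjk, hyk, hkj⟩) | ⟨j, k, hjk, hxk, hkj⟩)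
  · exact h
  · exact absurd (htop j k (hyk.trans hkj) hyk) hjk.ne
  · obtain ⟨k, rfl⟩ := Fin.exists_succ_eq.2 (Fin.ne_zero_of_lt hjk)
    simp only [Fin.cons_succ] at hxk hkj
    obtain rfl | ⟨j, rfl⟩ := Fin.eq_zero_or_eq_succ j
    · exact absurd hkj (hgap k hxk).asymm
    · simp only [Fin.cons_succ, Fin.succ_lt_succ_iff] at hjk hkj
      exact absurd (htop j k ((hgap k hxk).trans hkj) (hgap k hxk)) hjk.ne

theorem IsTopPair.has1234_cons_cons_iff [Preorder α] {x y : α} {u : Fin m → α}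
    (h : IsTopPair x y u) :
    Has1234 (Fin.cons x (Fin.cons y u)) ↔ Has1234 u := by
  obtain ⟨-, hgap, htop⟩ := h
  rw [has1234_cons_iff, has1234_cons_iff]
  refine ⟨?_, fun h => Or.inl (Or.inl h)⟩
  rintro ((h | ⟨j, k, l, -, hkl, h₁, h₂, h₃⟩) | ⟨j, k, l, hjk, hkl, h₁, h₂, h₃⟩)
  · exact h
  · exact absurd (htop k l (h₁.trans h₂) ((h₁.trans h₂).trans h₃)) hkl.ne
  · obtain ⟨k, rfl⟩ := Fin.exists_succ_eq.2 (Fin.ne_zero_of_lt hjk)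
    obtain ⟨l, rfl⟩ := Fin.exists_succ_eq.2 (Fin.ne_zero_of_lt hkl)
    simp only [Fin.cons_succ, Fin.succ_lt_succ_iff] at hkl h₂ h₃
    have hxk : x < u k := h₁.trans h₂
    exact absurd (htop k l (hgap k hxk) (hgap l (hxk.trans h₃))) hkl.ne

theorem isTopPair_of_injective [LinearOrder α] {x y : α} {u : Fin m → α}
    (hw : Function.Injective (Fin.cons x (Fin.cons y u)))
    (h132 : ¬ Has132 (Fin.cons x (Fin.cons y u)))
    (h1234 : ¬ Has1234 (Fin.cons x (Fin.cons y u)))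
    (hxy : x < y) : IsTopPair x y u := by
  have h01 : (0 : Fin (m + 2)) < (0 : Fin (m + 1)).succ := Fin.succ_pos 0
  have h1 : ∀ k : Fin m, (0 : Fin (m + 1)).succ < k.succ.succ :=
    fun k => Fin.succ_lt_succ_iff.2 (Fin.succ_pos k)
  have h2 : ∀ {j k : Fin m}, j < k → j.succ.succ < k.succ.succ :=
    fun h => Fin.succ_lt_succ_iff.2 (Fin.succ_lt_succ_iff.2 h)
  have hu : Function.Injective u := fun j k h =>
    Fin.succ_injective _ (Fin.succ_injective _ (hw (a₁ := j.succ.succ) (a₂ := k.succ.succ) h))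
  refine ⟨hxy, fun k hxk => ?_, fun j k hyj hyk => ?_⟩
  · have hky : u k ≠ y := fun h => Fin.succ_ne_zero k <| Fin.succ_injective _ <|
      hw (a₁ := k.succ.succ) (a₂ := (0 : Fin (m + 1)).succ) h
    refine (lt_or_gt_of_ne hky).resolve_left fun hky => h132 ?_
    exact ⟨0, _, k.succ.succ, h01, h1 k, hxk, hky⟩
  · by_contra hjk
    rcases lt_or_gt_of_ne hjk with hjk | hjk <;> rcases lt_or_gt_of_ne (hu.ne hjk.ne) with huv | huv
    · exact h1234 ⟨0, _, j.succ.succ, k.succ.succ, h01, h1 j, h2 hjk, hxy, hyj, huv⟩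
    · exact h132 ⟨_, j.succ.succ, k.succ.succ, h1 j, h2 hjk, hyk, huv⟩
    · exact h1234 ⟨0, _, k.succ.succ, j.succ.succ, h01, h1 k, h2 hjk, hxy, hyk, huv⟩
    · exact h132 ⟨_, k.succ.succ, j.succ.succ, h1 k, h2 hjk, hyj, huv⟩

end Words

section InsertPair

variable {m : ℕ}

theorem IsTopPair.exists_castSucc_succ {x y : Fin (m + 2)} {u : Fin m → Fin (m + 2)}
    (h : IsTopPair x y u) (hw : Function.Surjective (Fin.cons x (Fin.cons y u))) :
    ∃ c : Fin (m + 1), c.castSucc = x ∧ c.succ = y ∧ m ≤ (c : ℕ) + 1 := by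
  obtain ⟨hxy, hgap, htop⟩ := h
  have habove : ∀ t, x < t → t = y ∨ ∃ k, y < u k ∧ u k = t := by
    intro t hxt
    obtain ⟨p, rfl⟩ := hw t
    obtain rfl | ⟨p, rfl⟩ := Fin.eq_zero_or_eq_succ p
    · exact absurd hxt (lt_irrefl x)
    obtain rfl | ⟨k, rfl⟩ := Fin.eq_zero_or_eq_succ p
    · exact Or.inl rfl
    · exact Or.inr ⟨k, hgap k hxt, rfl⟩
  rw [Fin.lt_def] at hxy
  have hy : (y : ℕ) = x + 1 := by
    by_contra hne
    rcases habove ⟨x + 1, by omega⟩ (Fin.lt_def.2 (by dsimp only; omega)) with h | ⟨k, hyk, hk⟩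
    · exact hne (by rw [← h])
    · rw [hk, Fin.lt_def] at hyk
      dsimp only at hyk
      omega
  have hm : m ≤ (y : ℕ) := by
    by_contra hym
    obtain h | ⟨k, hyk, hk⟩ := habove ⟨m, by omega⟩ (Fin.lt_def.2 (by dsimp only; omega))
    · exact hym (by rw [← h])
    obtain h | ⟨l, hyl, hl⟩ := habove ⟨m + 1, by omega⟩ (Fin.lt_def.2 (by dsimp only; omega))
    · exact hym (by rw [← h]; dsimp only; omega)
    · obtain rfl := htop k l hyk hyl
      simp [hk] at hl
  exact ⟨⟨x, by omega⟩, Fin.ext rfl, Fin.ext (by rw [Fin.val_succ, hy]), by dsimp only; omega⟩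

def skipPair (c : Fin (m + 1)) (k : Fin m) : Fin (m + 2) :=
  if (k : ℕ) < c then ⟨k, by omega⟩ else ⟨k + 2, by omega⟩

theorem val_skipPair (c : Fin (m + 1)) (k : Fin m) :
    (skipPair c k : ℕ) = if (k : ℕ) < c then (k : ℕ) else (k : ℕ) + 2 := by
  unfold skipPair
  split_ifs <;> rfl

theorem skipPair_strictMono (c : Fin (m + 1)) : StrictMono (skipPair c) := by
  intro a b hab
  rw [Fin.lt_def] at hab ⊢
  rw [val_skipPair, val_skipPair]
  split_ifs <;> omega

theorem mem_range_skipPair {c : Fin (m + 1)} {j : Fin (m + 2)} :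
    j ∈ Set.range (skipPair c) ↔ j ≠ c.castSucc ∧ j ≠ c.succ := by
  simp only [ne_eq, Fin.ext_iff, Fin.val_castSucc, Fin.val_succ]
  constructor
  · rintro ⟨k, rfl⟩
    rw [val_skipPair]
    split_ifs <;> omega
  · rintro ⟨hc, hc'⟩
    by_cases hj : (j : ℕ) < c
    · exact ⟨⟨j, by omega⟩, Fin.ext (by rw [val_skipPair, if_pos hj])⟩
    · refine ⟨⟨j - 2, by omega⟩, Fin.ext ?_⟩
      rw [val_skipPair, if_neg (by dsimp only; omega)]
      dsimp only
      omega

theorem isTopPair_skipPair {n : ℕ} {c : Fin (m + 1)} (hc : m ≤ (c : ℕ) + 1) {v : Fin n → Fin m}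
    (hv : Function.Injective v) : IsTopPair c.castSucc c.succ (skipPair c ∘ v) := by
  refine ⟨Fin.castSucc_lt_succ, fun k hk => ?_, fun j k hj hk => hv (Fin.ext ?_)⟩
  · obtain ⟨-, hne⟩ := (mem_range_skipPair (c := c)).1 ⟨v k, rfl⟩
    rw [Function.comp_apply, Fin.lt_def] at hk ⊢
    rw [ne_eq, Fin.ext_iff] at hne
    simp only [Fin.val_castSucc, Fin.val_succ] at hk hne ⊢
    omega
  · simp only [Function.comp_apply, Fin.lt_def, val_skipPair, Fin.val_succ] at hj hk
    have := (v j).isLt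
    have := (v k).isLt
    split_ifs at hj hk <;> omega

theorem injective_cons_cons_skipPair (c : Fin (m + 1)) (v : Perm (Fin m)) :
    Function.Injective
      (Fin.cons c.castSucc (Fin.cons c.succ (skipPair c ∘ v))) := by
  have hrange : ∀ k, skipPair c (v k) ≠ c.castSucc ∧ skipPair c (v k) ≠ c.succ :=
    fun k => mem_range_skipPair.1 ⟨v k, rfl⟩
  simp only [Fin.cons_injective_iff, Fin.range_cons, Set.mem_insert_iff, Set.mem_range,
    Function.comp_apply, not_or, not_exists]
  exact ⟨⟨Fin.castSucc_lt_succ.ne, fun k => (hrange k).1⟩, fun k => (hrange k).2,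
    (skipPair_strictMono c).injective.comp v.injective⟩

noncomputable def insertPair (c : Fin (m + 1)) (v : Perm (Fin m)) :
    Perm (Fin (m + 2)) :=
  Equiv.ofBijective _ (Finite.injective_iff_bijective.mp (injective_cons_cons_skipPair c v))

theorem coe_insertPair (c : Fin (m + 1)) (v : Perm (Fin m)) :
    ⇑(insertPair c v) =
      Fin.cons c.castSucc (Fin.cons c.succ (skipPair c ∘ v)) :=
  rfl

theorem insertPair_inj {c c' : Fin (m + 1)} {v v' : Perm (Fin m)} :
    insertPair c v = insertPair c' v' ↔ c = c' ∧ v = v' := by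
  refine ⟨fun h => ?_, fun ⟨hc, hv⟩ => hc ▸ hv ▸ rfl⟩
  have h := congrArg DFunLike.coe h
  simp only [coe_insertPair, Fin.cons_inj, Fin.castSucc_inj] at h
  obtain ⟨rfl, -, h⟩ := h
  exact ⟨rfl, DFunLike.coe_injective ((skipPair_strictMono c).injective.comp_left h)⟩

end InsertPair

section Admissible

variable {m : ℕ}

def Admissible (w : Perm (Fin m)) : Prop :=
  Alternating w ∧ Avoids132 w ∧ ¬ ContainsP w (1 : Perm (Fin 4))

theorem admissible_iff (w : Perm (Fin m)) :
    Admissible w ↔ IsAlternating ⇑w ∧ ¬ Has132 ⇑w ∧ ¬ Has1234 ⇑w := by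
  rw [Admissible, Avoids132, ContainsP, contains_pat132_iff_s16, contains_one_iff]
  rfl

theorem admissible_insertPair (hm : 2 ≤ m) {c : Fin (m + 1)} (hc : m ≤ (c : ℕ) + 1)
    {v : Perm (Fin m)} (hv : Admissible v) : Admissible (insertPair c v) := by
  obtain ⟨halt, h132, h1234⟩ := (admissible_iff v).1 hv
  have hpair := isTopPair_skipPair hc v.injective
  have hmono := skipPair_strictMono c
  rw [admissible_iff, coe_insertPair, hpair.has132_cons_cons_iff, hpair.has1234_cons_cons_iff,
    has132_comp_iff hmono, has1234_comp_iff hmono, isAlternating_cons_cons_iff,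
    isAlternating_comp_iff hmono]
  refine ⟨⟨hpair.1, fun h0 => ?_, halt⟩, h132, h1234⟩
  have h01 : v ⟨0, h0⟩ < v ⟨1, by omega⟩ := (halt 0 (by omega)).1 rfl
  have h1 := (v ⟨1, by omega⟩).isLt
  rw [Fin.lt_def] at h01 ⊢
  rw [Function.comp_apply, val_skipPair, Fin.val_succ]
  split_ifs <;> omega

theorem exists_insertPair_eq {W : Perm (Fin (m + 2))} (hW : Admissible W) :
    ∃ c : Fin (m + 1), ∃ v, m ≤ (c : ℕ) + 1 ∧ Admissible v ∧ insertPair c v = W := by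
  set u : Fin m → Fin (m + 2) := fun k => W k.succ.succ
  have hWu : ⇑W = Fin.cons (W 0) (Fin.cons (W 1) u) := eq_cons_cons W
  rw [admissible_iff, hWu, isAlternating_cons_cons_iff] at hW
  obtain ⟨⟨h01, -, halt⟩, h132, h1234⟩ := hW
  have hinj := W.injective
  have hsurj := W.surjective
  rw [hWu] at hinj hsurj
  have hpair := isTopPair_of_injective hinj h132 h1234 h01
  obtain ⟨c, hc0, hc1, hcm⟩ := hpair.exists_castSucc_succ hsurj
  have hu : ∀ k, u k ∈ Set.range (skipPair c) := fun k => by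
    rw [mem_range_skipPair, hc0, hc1]
    exact ⟨hinj.ne (a₁ := k.succ.succ) (Fin.succ_ne_zero _),
      hinj.ne (a₁ := k.succ.succ) (a₂ := (0 : Fin (m + 1)).succ)
        ((Fin.succ_injective _).ne (Fin.succ_ne_zero k))⟩
  have huinj : Function.Injective u := fun a b h =>
    Fin.succ_injective _ (Fin.succ_injective _ (W.injective h))
  obtain ⟨v, hv⟩ := exists_perm_comp_eq huinj hu
  have hmono := skipPair_strictMono c
  refine ⟨c, v, hcm, ?_, DFunLike.coe_injective ?_⟩
  · rw [admissible_iff, ← isAlternating_comp_iff hmono, ← has132_comp_iff hmono,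
      ← has1234_comp_iff hmono, hv, ← hpair.has132_cons_cons_iff, ← hpair.has1234_cons_cons_iff]
    exact ⟨halt, h132, h1234⟩
  · rw [coe_insertPair, hv, hc0, hc1]
    exact hWu.symm

instance (w : Perm (Fin m)) : Decidable (Admissible w) :=
  decidable_of_iff _ (admissible_iff w).symm

theorem card_subtype_le_val_add_one (hm : 1 ≤ m) :
    Nat.card {c : Fin (m + 1) // m ≤ (c : ℕ) + 1} = 2 := by
  rw [Nat.card_eq_two_iff]
  refine ⟨⟨Fin.last m, by simp⟩, ⟨⟨m - 1, by omega⟩, by dsimp only; omega⟩, ?_, ?_⟩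
  · simp only [ne_eq, Subtype.ext_iff, Fin.ext_iff, Fin.val_last]
    omega
  · ext ⟨c, hc⟩
    simp only [Set.mem_insert_iff, Subtype.ext_iff, Fin.ext_iff, Fin.val_last,
      Set.mem_singleton_iff, Set.mem_univ, iff_true]
    omega

noncomputable def insertPairEquiv (hm : 2 ≤ m) :
    {c : Fin (m + 1) // m ≤ (c : ℕ) + 1} × {v : Perm (Fin m) // Admissible v} ≃
      {W : Perm (Fin (m + 2)) // Admissible W} :=
  Equiv.ofBijective (fun p => ⟨insertPair p.1 p.2, admissible_insertPair hm p.1.2 p.2.2⟩)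
    ⟨fun p q h => by
      obtain ⟨hc, hv⟩ := insertPair_inj.1 (congrArg Subtype.val h)
      exact Prod.ext (Subtype.ext hc) (Subtype.ext hv),
    fun ⟨W, hW⟩ => by
      obtain ⟨c, v, hc, hv, rfl⟩ := exists_insertPair_eq hW
      exact ⟨(⟨c, hc⟩, ⟨v, hv⟩), rfl⟩⟩

theorem card_admissible_add_two (hm : 2 ≤ m) :
    Nat.card {W : Perm (Fin (m + 2)) // Admissible W} =
      2 * Nat.card {v : Perm (Fin m) // Admissible v} := by
  rw [← Nat.card_congr (insertPairEquiv hm), Nat.card_prod,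
    card_subtype_le_val_add_one (by omega)]

end Admissible

/-- `a_{2n+1}(132, 1234) = ⌈2^{n-1}⌉` (which in ℕ is `2^(n-1)`,
equal to `1` when `n = 0`). -/
theorem stmt16 (n : ℕ) :
    Nat.card {w : Equiv.Perm (Fin (2 * n + 1)) //
        Alternating w ∧ Avoids132 w ∧
          ¬ ContainsP w (1 : Equiv.Perm (Fin 4))} = 2 ^ (n - 1) := by
  change Nat.card {w : Perm (Fin (2 * n + 1)) // Admissible w} = 2 ^ (n - 1)
  induction n using Nat.twoStepInduction with
  | zero => rw [Nat.card_eq_fintype_card]; decide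
  | one => rw [Nat.card_eq_fintype_card]; decide
  | more n _ ih =>
    rw [show 2 * (n + 2) + 1 = 2 * (n + 1) + 1 + 2 by ring, card_admissible_add_two (by omega), ih]
    simp [pow_succ']
end
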